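/- Let a ∈ ℝ and b, c > 0, and define K on the open set U = {(x, y) ∈ ℝ² : |y| < x} by K(x, y) = a + (2bx + c)/(x² − y²). Then at every point of U, −∂K/∂x > |∂K/∂y|; explicitly, ∂K/∂x = −2(b(x² + y²) + cx)/(x² − y²)² and ∂K/∂y = 2y(2bx + c)/(x² − y²)². -/

import Mathlib

/-!
The partial derivatives are ordinary derivatives of `K` along the coordinate lines. On `|y| < x`
the denominator `x² − y²` is positive, and after clearing it the parabolicity inequality
`|y| (2bx + c) < b (x² + y²) + c x` is `b (x − |y|)² + c (x − |y|) > 0`.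
-/

/-- Partial derivative with respect to the first variable. -/
noncomputable def pdx (f : ℝ × ℝ → ℝ) (p : ℝ × ℝ) : ℝ := fderiv ℝ f p (1, 0)

/-- Partial derivative with respect to the second variable. -/
noncomputable def pdy (f : ℝ × ℝ → ℝ) (p : ℝ × ℝ) : ℝ := fderiv ℝ f p (0, 1)

theorem hasDerivAt_pdx {f : ℝ × ℝ → ℝ} {p : ℝ × ℝ} (hf : DifferentiableAt ℝ f p) :
    HasDerivAt (fun t => f (t, p.2)) (pdx f p) p.1 :=
  hf.hasFDerivAt.comp_hasDerivAt p.1 ((hasDerivAt_id p.1).prodMk (hasDerivAt_const p.1 p.2))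

theorem hasDerivAt_pdy {f : ℝ × ℝ → ℝ} {p : ℝ × ℝ} (hf : DifferentiableAt ℝ f p) :
    HasDerivAt (fun t => f (p.1, t)) (pdy f p) p.2 :=
  hf.hasFDerivAt.comp_hasDerivAt p.2 ((hasDerivAt_const p.2 p.1).prodMk (hasDerivAt_id p.2))

noncomputable def weingartenSpeed (a b c : ℝ) (q : ℝ × ℝ) : ℝ :=
  a + (2 * b * q.1 + c) / (q.1 ^ 2 - q.2 ^ 2)

section

variable {a b c : ℝ} {p : ℝ × ℝ}

theorem differentiableAt_weingartenSpeed (hp : p.1 ^ 2 - p.2 ^ 2 ≠ 0) :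
    DifferentiableAt ℝ (weingartenSpeed a b c) p := by
  unfold weingartenSpeed
  fun_prop (disch := exact hp)

theorem pdx_weingartenSpeed (hp : p.1 ^ 2 - p.2 ^ 2 ≠ 0) :
    pdx (weingartenSpeed a b c) p =
      -(2 * (b * (p.1 ^ 2 + p.2 ^ 2) + c * p.1) / (p.1 ^ 2 - p.2 ^ 2) ^ 2) := by
  obtain ⟨x, y⟩ := p
  dsimp only at hp ⊢
  have hnum : HasDerivAt (fun t => 2 * b * t + c) (2 * b) x := by
    simpa using ((hasDerivAt_id x).const_mul (2 * b)).add_const c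
  have hden : HasDerivAt (fun t => t ^ 2 - y ^ 2) (2 * x) x := by
    simpa using (hasDerivAt_pow 2 x).sub_const (y ^ 2)
  refine (hasDerivAt_pdx (differentiableAt_weingartenSpeed hp)).unique ?_
  refine ((hnum.div hden hp).const_add a).congr_deriv ?_
  field_simp
  ring

theorem pdy_weingartenSpeed (hp : p.1 ^ 2 - p.2 ^ 2 ≠ 0) :
    pdy (weingartenSpeed a b c) p = 2 * p.2 * (2 * b * p.1 + c) / (p.1 ^ 2 - p.2 ^ 2) ^ 2 := by
  obtain ⟨x, y⟩ := p
  dsimp only at hp ⊢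
  have hden : HasDerivAt (fun t => x ^ 2 - t ^ 2) (-(2 * y)) y := by
    simpa using (hasDerivAt_pow 2 y).const_sub (x ^ 2)
  refine (hasDerivAt_pdy (differentiableAt_weingartenSpeed hp)).unique ?_
  refine (((hasDerivAt_const y (2 * b * x + c)).div hden hp).const_add a).congr_deriv ?_
  field_simp
  ring

theorem abs_mul_two_mul_add_lt {x y : ℝ} (hb : 0 ≤ b) (hc : 0 < c) (h : |y| < x) :
    |y| * (2 * b * x + c) < b * (x ^ 2 + y ^ 2) + c * x := by
  nlinarith [mul_nonneg hb (sq_nonneg (x - |y|)), mul_pos hc (sub_pos.mpr h), sq_abs y]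

theorem abs_pdy_lt_neg_pdx_weingartenSpeed (hb : 0 ≤ b) (hc : 0 < c) (hp : |p.2| < p.1) :
    |pdy (weingartenSpeed a b c) p| < -pdx (weingartenSpeed a b c) p := by
  have hx : 0 < p.1 := (abs_nonneg p.2).trans_lt hp
  have hD : 0 < p.1 ^ 2 - p.2 ^ 2 := by nlinarith [sq_abs p.2, abs_nonneg p.2]
  rw [pdx_weingartenSpeed hD.ne', pdy_weingartenSpeed hD.ne', neg_neg, abs_div, abs_mul, abs_mul,
    abs_two, abs_of_pos (by positivity : 0 < 2 * b * p.1 + c), abs_of_pos (pow_pos hD 2)]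
  gcongr ?_ / _
  linarith [abs_mul_two_mul_add_lt hb hc hp]

end

theorem linear_weingarten_parabolic (a b c : ℝ) (hb : 0 < b) (hc : 0 < c)
    (K : ℝ × ℝ → ℝ)
    (hK : K = fun q : ℝ × ℝ => a + (2 * b * q.1 + c) / (q.1 ^ 2 - q.2 ^ 2)) :
    ∀ p : ℝ × ℝ, |p.2| < p.1 →
      pdx K p = -(2 * (b * (p.1 ^ 2 + p.2 ^ 2) + c * p.1) / (p.1 ^ 2 - p.2 ^ 2) ^ 2) ∧
      pdy K p = 2 * p.2 * (2 * b * p.1 + c) / (p.1 ^ 2 - p.2 ^ 2) ^ 2 ∧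
      |pdy K p| < -pdx K p := by
  have hK' : K = weingartenSpeed a b c := hK
  subst hK'
  intro p hp
  have hD : p.1 ^ 2 - p.2 ^ 2 ≠ 0 := by nlinarith [sq_abs p.2, abs_nonneg p.2]
  exact ⟨pdx_weingartenSpeed hD, pdy_weingartenSpeed hD,
    abs_pdy_lt_neg_pdx_weingartenSpeed hb.le hc hp⟩
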